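/- arXiv:2603.13916 — 7 statements merged into one kernel-verified Lean document; each statement's English description precedes it below -/
import Mathlib

section
/- Let A be the commutative monoid with universe {1, a, b} where 1 is neutral, b is a zero element, and a·a = b. Then A satisfies x² = x³ for all x, but A is not an inverse monoid (there is no c ∈ A with a = a²·c). -/
theorem three_element_monoid_not_inverse {A : Type*} [CommMonoid A] (a b : A)
    (hcar : ∀ x : A, x = 1 ∨ x = a ∨ x = b)
    (hbzero : ∀ x : A, b * x = b)
    (hab : a * a = b)
    (hne : a ≠ b) :
    (∀ x : A, x ^ 2 = x ^ 3) ∧ ¬ ∃ c : A, a = a ^ 2 * c := by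
  constructor
  · intro x
    rcases hcar x with h | h | h <;> subst h <;>
      simp [pow_succ, pow_two, hab, hbzero, mul_assoc]
  · rintro ⟨c, hc⟩
    apply hne
    rw [hc, pow_two, hab, hbzero]
end

section
/- Let A be a commutative monoid, a ∈ A an n-nilpotent element (a^n is a zero element), and b ∈ A with a^(n+1)·b = a^n and b²·a = b. Then b = a^n. -/
theorem nilpotent_case_unique_value {A : Type*} [CommMonoid A] (a b : A) (n : ℕ)
    (hzero : ∀ x : A, a ^ n * x = a ^ n)
    (h1 : a ^ (n + 1) * b = a ^ n)
    (h2 : b ^ 2 * a = b) : b = a ^ n := by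
  have key : ∀ k : ℕ, b = b ^ (k + 1) * a ^ k := by
    intro k
    induction k with
    | zero => simp
    | succ k ih =>
      have e : b ^ (k + 1 + 1) * a ^ (k + 1) = (b ^ 2 * a) * (b ^ k * a ^ k) := by
        rw [pow_succ, pow_succ, pow_succ, pow_two]
        ac_rfl
      rw [e, h2]
      calc b = b ^ (k + 1) * a ^ k := ih
        _ = b * (b ^ k * a ^ k) := by rw [pow_succ]; ac_rfl
  calc b = b ^ (n + 1) * a ^ n := key n
    _ = a ^ n * b ^ (n + 1) := mul_comm _ _
    _ = a ^ n := hzero _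
end

section
/- Let B be the commutative monoid on {0,1}³ ∪ {0̄} defined by componentwise addition truncated to 0̄ (with 0̄ absorbing and (0,0,0) neutral). Then B is subdirectly irreducible: every congruence θ on B other than the identity relation contains the pair (0̄, (1,1,1)). -/
/-!
Read `Bool × Bool × Bool` as the Boolean algebra of subsets of a three-element set: then `bmul`
is disjoint union, with `0̄` recording an overlap. Given `x ≠ y`, one of them, say `y`, is a triple
`b` that does not lie above the other, so multiplying by the complement `bᶜ` sends `y` to
`b ⊔ bᶜ = (1,1,1)` and `x` to `0̄`. A congruence relating `x` and `y` therefore relates `0̄` and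
`(1,1,1)`.
-/

/-- The monoid `B` with universe `{0,1}³ ∪ {0̄}`: `none` is the absorbing
element `0̄`, `some (k,m,n)` is a triple in `{0,1}³` (encoded by `Bool`). -/
def Bcar : Type := Option (Bool × Bool × Bool)

/-- Multiplication: componentwise addition if the result stays in `{0,1}³`,
and `0̄` otherwise; `0̄` is absorbing. -/
def bmul : Bcar → Bcar → Bcar
  | some (k₁, m₁, n₁), some (k₂, m₂, n₂) =>
      if (k₁ && k₂) || (m₁ && m₂) || (n₁ && n₂) then none
      else some (k₁ || k₂, m₁ || m₂, n₁ || n₂)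
  | _, _ => none

theorem bmul_some_some (a b : Bool × Bool × Bool) :
    bmul (some a) (some b) = if a ⊓ b = ⊥ then some (a ⊔ b) else none := by
  obtain ⟨k₁, m₁, n₁⟩ := a
  obtain ⟨k₂, m₂, n₂⟩ := b
  cases k₁ <;> cases m₁ <;> cases n₁ <;> cases k₂ <;> cases m₂ <;> cases n₂ <;> rfl

theorem bmul_some_compl_self (b : Bool × Bool × Bool) :
    bmul (some b) (some bᶜ) = some ⊤ := by
  rw [bmul_some_some, if_pos inf_compl_eq_bot, sup_compl_eq_top]

theorem bmul_some_compl_of_not_le {a b : Bool × Bool × Bool} (h : ¬a ≤ b) :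
    bmul (some a) (some bᶜ) = none := by
  rw [bmul_some_some, if_neg (by rwa [← disjoint_iff, disjoint_compl_right_iff])]

theorem bmul_none_left (z : Bcar) : bmul none z = none := by
  cases z <;> rfl

theorem bmul_compl_eq_none {x : Bcar} {b : Bool × Bool × Bool}
    (h : ∀ a, x = some a → ¬a ≤ b) : bmul x (some bᶜ) = none := by
  cases x with
  | none => exact bmul_none_left _
  | some a => exact bmul_some_compl_of_not_le (h a rfl)

theorem exists_bmul_separates {x y : Bcar} (hxy : x ≠ y) :
    ∃ z, bmul x z = none ∧ bmul y z = some ⊤ ∨ bmul x z = some ⊤ ∧ bmul y z = none := by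
  have separate : ∀ {x : Bcar} {b}, (∀ a, x = some a → ¬a ≤ b) →
      bmul x (some bᶜ) = none ∧ bmul (some b) (some bᶜ) = some ⊤ :=
    fun h => ⟨bmul_compl_eq_none h, bmul_some_compl_self _⟩
  cases x with
  | none =>
    cases y with
    | none => exact absurd rfl hxy
    | some b => exact ⟨some bᶜ, .inl (separate (x := none) nofun)⟩
  | some a =>
    cases y with
    | none => exact ⟨some aᶜ, .inr (separate (x := none) nofun).symm⟩
    | some b =>
      by_cases hab : a ≤ b
      · have hba : ¬b ≤ a := fun hba => hxy (congrArg some (le_antisymm hab hba))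
        exact ⟨some aᶜ, .inr (separate (by rintro _ ⟨⟩; exact hba)).symm⟩
      · exact ⟨some bᶜ, .inl (separate (by rintro _ ⟨⟩; exact hab))⟩

/-- Every congruence on `B` other than the identity relates `0̄` and `(1,1,1)`. -/
theorem B_subdirectly_irreducible (r : Bcar → Bcar → Prop)
    (hequiv : Equivalence r)
    (hcong : ∀ x y u v : Bcar, r x y → r u v → r (bmul x u) (bmul y v))
    (hnontriv : ∃ x y : Bcar, x ≠ y ∧ r x y) :
    r none (some (true, true, true)) := by
  obtain ⟨x, y, hne, hxy⟩ := hnontriv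
  obtain ⟨z, ⟨hx, hy⟩ | ⟨hx, hy⟩⟩ := exists_bmul_separates hne
  · have := hcong x y z z hxy (hequiv.refl z)
    rwa [hx, hy] at this
  · have := hcong y x z z (hequiv.symm hxy) (hequiv.refl z)
    rwa [hx, hy] at this
end

section
/- Let A be a commutative monoid with zigzag data of length n ≥ 1: elements c₁,…,cₙ, d₁,…,dₙ, a₁,…,a_{2n+1}, b satisfying b = a₁c₁; a₁ = d₁a₂; a_{2i}c_i = a_{2i+1}c_{i+1} for 1 ≤ i ≤ n−1; d_i a_{2i+1} = d_{i+1} a_{2(i+1)} for 1 ≤ i ≤ n−1; a_{2n}c_n = a_{2n+1}; d_n a_{2n+1} = b. Setting d₀ = 1, for every 0 ≤ m ≤ n−1 one has d_m · a_{2m+1} · c_{m+1} = b = d_{m+1} · a_{2(m+1)} · c_{m+1}. -/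
/-- The Isbell zigzag equations of length `n` for data `c, d` (witnesses,
indexed `1,…,n`), spine `a` (indexed `1,…,2n+1`) and value `b`.
For `n = 0` they reduce to `a 1 = b`. -/
def IsZigzag {A : Type*} [CommMonoid A] (n : ℕ) (c d a : ℕ → A) (b : A) : Prop :=
  if n = 0 then a 1 = b else
    b = a 1 * c 1 ∧
    a 1 = d 1 * a 2 ∧
    (∀ i, 1 ≤ i → i < n → a (2 * i) * c i = a (2 * i + 1) * c (i + 1)) ∧
    (∀ i, 1 ≤ i → i < n → d i * a (2 * i + 1) = d (i + 1) * a (2 * (i + 1))) ∧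
    a (2 * n) * c n = a (2 * n + 1) ∧
    d n * a (2 * n + 1) = b

theorem zigzag_intermediate_values {A : Type*} [CommMonoid A] (n : ℕ) (hn : 1 ≤ n)
    (c d a : ℕ → A) (b : A) (hd0 : d 0 = 1)
    (hzig : IsZigzag n c d a b) :
    ∀ m : ℕ, m < n →
      d m * a (2 * m + 1) * c (m + 1) = b ∧
      b = d (m + 1) * a (2 * (m + 1)) * c (m + 1) := by
  have hn0 : n ≠ 0 := Nat.one_le_iff_ne_zero.mp hn
  rw [IsZigzag, if_neg hn0] at hzig
  obtain ⟨h1, h2, h3, h4, h5, h6⟩ := hzig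
  intro m
  induction m with
  | zero =>
    intro _
    constructor
    · simp [hd0, ← h1]
    · rw [show 2 * (0 + 1) = 2 by ring, show (0:ℕ) + 1 = 1 from rfl, ← h2, ← h1]
  | succ k ih =>
    intro hk
    have hk' : k < n := Nat.lt_of_succ_lt hk
    obtain ⟨_, ihb⟩ := ih hk'
    have hzz := h3 (k + 1) (Nat.le_add_left 1 k) hk
    constructor
    · calc d (k + 1) * a (2 * (k + 1) + 1) * c (k + 1 + 1)
          = d (k + 1) * (a (2 * (k + 1) + 1) * c (k + 1 + 1)) := mul_assoc _ _ _
        _ = d (k + 1) * (a (2 * (k + 1)) * c (k + 1)) := by rw [← hzz]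
        _ = d (k + 1) * a (2 * (k + 1)) * c (k + 1) := (mul_assoc _ _ _).symm
        _ = b := ihb.symm
    · have hdd := h4 (k + 1) (Nat.le_add_left 1 k) hk
      calc b = d (k + 1) * a (2 * (k + 1)) * c (k + 1) := ihb
        _ = d (k + 1) * (a (2 * (k + 1)) * c (k + 1)) := mul_assoc _ _ _
        _ = d (k + 1) * (a (2 * (k + 1) + 1) * c (k + 1 + 1)) := by rw [hzz]
        _ = d (k + 1) * a (2 * (k + 1) + 1) * c (k + 1 + 1) := (mul_assoc _ _ _).symm
        _ = d (k + 1 + 1) * a (2 * (k + 1 + 1)) * c (k + 1 + 1) := by rw [hdd]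
end

section
/- Let A be a commutative monoid with zigzag data of length n ≥ 1 (elements c₁,…,cₙ, d₁,…,dₙ, a₁,…,a_{2n+1}, b satisfying the Isbell zigzag equations). Then for every e ∈ A, the tuple c₁,…,cₙ, e·d₁,…,e·dₙ, e·a₁, a₂,…,a_{2n+1}, e·b also satisfies the Isbell zigzag equations of length n. -/
theorem zigzag_multiply {A : Type*} [CommMonoid A] (n : ℕ) (hn : 1 ≤ n)
    (c d a : ℕ → A) (b : A)
    (hzig : IsZigzag n c d a b) (e : A) :
    IsZigzag n c (fun i => e * d i) (fun j => if j = 1 then e * a j else a j) (e * b) := by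
  have hn0 : n ≠ 0 := by omega
  unfold IsZigzag at *
  rw [if_neg hn0] at *
  obtain ⟨h1, h2, h3, h4, h5, h6⟩ := hzig
  refine ⟨?_, ?_, ?_, ?_, ?_, ?_⟩ <;> simp only
  · rw [if_pos trivial, h1, mul_assoc]
  · rw [if_pos trivial, if_neg (by norm_num), h2, mul_assoc]
  · intro i hi hi'
    rw [if_neg (by omega), if_neg (by omega)]
    exact h3 i hi hi'
  · intro i hi hi'
    rw [if_neg (by omega), if_neg (by omega)]
    rw [mul_assoc, mul_assoc, h4 i hi hi']
  · rw [if_neg (by omega), if_neg (by omega)]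
    exact h5
  · rw [if_neg (by omega), mul_assoc, h6]
end

section
/- Let A be a commutative monoid with zigzag data of length n ≥ 2 (cᵢ, dᵢ, aⱼ, b satisfying the Isbell zigzag equations). Then the shortened data c₂,…,cₙ, d₂,…,dₙ with new spine d₁·a₃, a₄,…,a_{2n+1} and the same value b satisfies the Isbell zigzag equations of length n−1. -/
namespace IsZigzag

variable {A : Type*} [CommMonoid A] {n : ℕ} {c d a : ℕ → A} {b : A}

theorem shorten (h : IsZigzag (n + 1) c d a b) :
    IsZigzag n (fun i => c (i + 1)) (fun i => d (i + 1))
      (fun j => if j = 1 then d 1 * a 3 else a (j + 2)) b := by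
  rw [IsZigzag, if_neg n.succ_ne_zero] at h
  obtain ⟨hb, ha₁, hc, hd, hcₙ, hdₙ⟩ := h
  rcases n with _ | m
  · simpa [IsZigzag] using hdₙ
  have hb' : b = d 1 * a 3 * c 2 := calc
    b = d 1 * (a 2 * c 1) := by rw [hb, ha₁, mul_assoc]
    _ = d 1 * a 3 * c 2 := by rw [hc 1 le_rfl (by omega), mul_assoc]
  rw [IsZigzag, if_neg m.succ_ne_zero]
  -- The remaining equations are the old ones shifted by one; `2 * (i + 1)` and `2 * i + 2` agree
  -- definitionally, so they apply verbatim once the `if` is resolved.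
  refine ⟨hb', hd 1 le_rfl (by omega), fun i hi hin => ?_, fun i hi hin => ?_, ?_, ?_⟩
  · rw [if_neg (by omega), if_neg (by omega)]
    exact hc (i + 1) (by omega) (by omega)
  · rw [if_neg (by omega)]
    exact hd (i + 1) (by omega) (by omega)
  · rw [if_neg (by omega), if_neg (by omega)]
    exact hcₙ
  · rw [if_neg (by omega)]
    exact hdₙ

end IsZigzag

theorem zigzag_shorten {A : Type*} [CommMonoid A] (n : ℕ) (hn : 2 ≤ n)
    (c d a : ℕ → A) (b : A)
    (hzig : IsZigzag n c d a b) :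
    IsZigzag (n - 1) (fun i => c (i + 1)) (fun i => d (i + 1))
      (fun j => if j = 1 then d 1 * a 3 else a (j + 2)) b := by
  obtain ⟨m, rfl⟩ : ∃ m, n = m + 1 := ⟨n - 1, by omega⟩
  exact hzig.shorten
end

section
/- Let A be a commutative monoid with zigzag data of length n ≥ 1 in which d₁ is invertible and a₁ = a₂. Then b = d₁·b, and hence replacing b by d₁·b (which equals b) and shifting, there is zigzag data of length n−1 with spine a₃,…,a_{2n+1} and value b (with witnesses c₂,…,cₙ and d₁⁻¹d₂,…,d₁⁻¹dₙ). -/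
theorem zigzag_invertible_shorten {A : Type*} [CommMonoid A] (n : ℕ) (hn : 1 ≤ n)
    (c d a : ℕ → A) (b : A)
    (hzig : IsZigzag n c d a b)
    (dinv : A) (hdinv : d 1 * dinv = 1)
    (h12 : a 1 = a 2) :
    b = d 1 * b ∧
    IsZigzag (n - 1) (fun i => c (i + 1)) (fun i => dinv * d (i + 1))
      (fun j => a (j + 2)) b := by
  rw [IsZigzag, if_neg (by omega : ¬ n = 0)] at hzig
  obtain ⟨h1, h2, h3, h4, h5, h6⟩ := hzig
  have ha1 : a 1 = d 1 * a 1 := by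
    conv_lhs => rw [h2, ← h12]
  have hb : b = d 1 * b := by
    calc b = a 1 * c 1 := h1
      _ = d 1 * a 1 * c 1 := by rw [← ha1]
      _ = d 1 * (a 1 * c 1) := mul_assoc _ _ _
      _ = d 1 * b := by rw [← h1]
  refine ⟨hb, ?_⟩
  have hbinv : dinv * b = b := by
    conv_lhs => rw [hb]
    rw [← mul_assoc, mul_comm dinv, hdinv, one_mul]
  rcases Nat.lt_or_ge 1 n with h2n | h1n
  · -- n ≥ 2
    rw [IsZigzag, if_neg (by omega : ¬ n - 1 = 0)]
    refine ⟨?_, ?_, ?_, ?_, ?_, ?_⟩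
    · -- b = a 3 * c 2
      have := h3 1 le_rfl h2n
      simp only [mul_one] at this
      calc b = a 1 * c 1 := h1
        _ = a 2 * c 1 := by rw [h12]
        _ = a 3 * c 2 := by simpa using this
    · -- a 3 = dinv * d 2 * a 4
      have := h4 1 le_rfl h2n
      show a 3 = dinv * d 2 * a 4
      calc a 3 = 1 * a 3 := (one_mul _).symm
        _ = dinv * d 1 * a 3 := by rw [mul_comm dinv, hdinv]
        _ = dinv * (d 1 * a 3) := by rw [mul_assoc]
        _ = dinv * (d 2 * a 4) := by rw [show d 1 * a 3 = d 2 * a 4 by simpa using this]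
        _ = dinv * d 2 * a 4 := (mul_assoc _ _ _).symm
    · intro i hi hilt
      have := h3 (i + 1) (by omega) (by omega)
      show a (2 * i + 2) * c (i + 1) = a (2 * i + 1 + 2) * c (i + 1 + 1)
      have e1 : 2 * (i + 1) = 2 * i + 2 := by ring
      have e2 : 2 * (i + 1) + 1 = 2 * i + 1 + 2 := by ring
      rw [e2, e1] at this
      exact this
    · intro i hi hilt
      have := h4 (i + 1) (by omega) (by omega)
      show dinv * d (i + 1) * a (2 * i + 1 + 2) = dinv * d (i + 1 + 1) * a (2 * (i + 1) + 2)
      have e1 : 2 * (i + 1) + 1 = 2 * i + 1 + 2 := by ring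
      have e2 : 2 * (i + 1 + 1) = 2 * (i + 1) + 2 := by ring
      rw [e1] at this
      rw [mul_assoc, mul_assoc, show 2 * (i + 1) + 2 = 2 * (i + 1 + 1) from by ring, this]
    · show a (2 * (n - 1) + 2) * c (n - 1 + 1) = a (2 * (n - 1) + 1 + 2)
      have e1 : 2 * (n - 1) + 2 = 2 * n := by omega
      have e2 : n - 1 + 1 = n := by omega
      have e3 : 2 * (n - 1) + 1 + 2 = 2 * n + 1 := by omega
      rw [e1, e2, e3]; exact h5
    · show dinv * d (n - 1 + 1) * a (2 * (n - 1) + 1 + 2) = b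
      have e2 : n - 1 + 1 = n := by omega
      have e3 : 2 * (n - 1) + 1 + 2 = 2 * n + 1 := by omega
      rw [e2, e3, mul_assoc, h6, hbinv]
  · -- n = 1
    have hn1 : n = 1 := by omega
    subst hn1
    rw [IsZigzag, if_pos rfl]
    show a 3 = b
    have : a 2 * c 1 = a 3 := by simpa using h5
    rw [← this, ← h12, ← h1]
end
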